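/- arXiv:1407.8312 — 5 statements merged into one kernel-verified Lean document; each statement's English description precedes it below -/
import Mathlib

section
/- Let Π be a rectagraph and π : Q_n → Π a covering from the n-cube. Suppose 0·π = e_{i,j}·π for some i ≠ j (where e_{i,j} is the weight-2 vector with 1s in coordinates i and j). Then this leads to a contradiction; that is, 0 and e_{i,j} always lie in distinct fibers of π. Equivalently, if C = K^π ∩ 𝔽₂ⁿ is the subgroup of translations in K^π, then C does not contain any vector of weight 2. -/
/-- The `n`-cube: vertices are vectors in `𝔽₂ⁿ`, adjacent iff at Hamming distance 1. -/
def cube (n : ℕ) : SimpleGraph (Fin n → ZMod 2) where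
  Adj x y := hammingDist x y = 1
  symm := ⟨fun x y h => by rwa [hammingDist_comm]⟩
  loopless := ⟨fun x h => by simp [hammingDist_self] at h⟩

/-- A rectagraph: a connected triangle-free graph in which every 2-arc lies in a
unique quadrangle. -/
def IsRectagraph {V : Type*} (P : SimpleGraph V) : Prop :=
  P.Connected ∧ P.CliqueFree 3 ∧
    ∀ u v w : V, P.Adj v u → P.Adj v w → u ≠ w →
      ∃! x : V, x ≠ v ∧ P.Adj u x ∧ P.Adj w x

/-- `f` is a covering from `G` to `H`. -/
def IsCovering {V W : Type*} (G : SimpleGraph V) (H : SimpleGraph W)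
    (f : V → W) : Prop :=
  Function.Surjective f ∧
    ∀ x : V, Set.BijOn f (G.neighborSet x) (H.neighborSet (f x))

/-- The standard basis vector `e_i` of `𝔽₂ⁿ`. -/
def stdBasis (n : ℕ) (i : Fin n) : Fin n → ZMod 2 :=
  fun k => if k = i then 1 else 0

/-! `e_i` is a common neighbour of `0` and `e_i + e_j` in `Q_n`, and a covering is injective on
every neighbourhood, so it cannot identify `0` with `e_i + e_j`. -/

theorem IsCovering.map_ne_of_adj_of_adj {V W : Type*} {G : SimpleGraph V}
    {H : SimpleGraph W} {f : V → W} (hf : IsCovering G H f) {x y z : V}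
    (hx : G.Adj z x) (hy : G.Adj z y) (hxy : x ≠ y) : f x ≠ f y :=
  fun h => hxy ((hf.2 z).injOn hx hy h)

theorem hammingNorm_stdBasis (n : ℕ) (i : Fin n) : hammingNorm (stdBasis n i) = 1 := by
  rw [hammingNorm, Finset.card_eq_one]
  exact ⟨i, by ext k; by_cases hk : k = i <;> simp [stdBasis, hk]⟩

theorem cube_adj_add_stdBasis (n : ℕ) (x : Fin n → ZMod 2) (i : Fin n) :
    (cube n).Adj x (x + stdBasis n i) := by
  change hammingDist _ _ = 1
  rw [hammingDist_eq_hammingNorm, neg_add_cancel_left, hammingNorm_stdBasis]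

theorem fiber_no_weight_two_general {n : ℕ} {V : Type*}
    (P : SimpleGraph V)
    (f : (Fin n → ZMod 2) → V) (hf : IsCovering (cube n) P f)
    (i j : Fin n) (hij : i ≠ j) :
    f (fun k => if k = i ∨ k = j then 1 else 0) ≠ f 0 := by
  have hsum : (fun k => if k = i ∨ k = j then 1 else 0) = stdBasis n i + stdBasis n j := by
    ext k
    by_cases hi : k = i <;> by_cases hj : k = j <;> simp_all [stdBasis]
  have hne : stdBasis n i + stdBasis n j ≠ 0 := fun h => by
    simpa [stdBasis, hij] using congrFun h i
  have h0 : (cube n).Adj (stdBasis n i) 0 := by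
    simpa using (cube_adj_add_stdBasis n 0 i).symm
  rw [hsum]
  exact hf.map_ne_of_adj_of_adj (cube_adj_add_stdBasis n _ j) h0 hne

/-- If `P` is a rectagraph and `f : Q_n → P` a covering, then `0` and the
weight-2 vector `e_{i,j}` lie in distinct fibers of `f`. -/
theorem fiber_no_weight_two {n : ℕ} {V : Type*} [Finite V]
    (P : SimpleGraph V) (hP : IsRectagraph P)
    (f : (Fin n → ZMod 2) → V) (hf : IsCovering (cube n) P f)
    (i j : Fin n) (hij : i ≠ j) :
    f (fun k => if k = i ∨ k = j then 1 else 0) ≠ f 0 :=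
  fiber_no_weight_two_general P f hf i j hij
end

section
/- Let Π be a rectagraph and π : Q_n → Π a covering from the n-cube. Then for every vertex v of Π, the fiber π⁻¹(v) is a single orbit of the group K^π = {g ∈ Aut(Q_n) : π∘g = π}, on which K^π acts regularly. -/
/-!
Let `σ` be the permutation of coordinates with `f (y + e_{σ i}) = f (x + e_i)`, read off from the
two neighbourhood bijections at `x` and `y`; it extends to the automorphism
`g z = y + σ · (z - x)` of `Q_n`. Now `f ∘ g` and `f` are locally injective maps into `P` that
agree on the closed neighbourhood of `x`. Every 2-arc of `Q_n` lies in a quadrangle and every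
2-arc of `P` lies in at most one, so agreement on the closed neighbourhood of a vertex spreads to
the closed neighbourhoods of its neighbours, and hence to all of the connected cube: `f ∘ g = f`.
For uniqueness, two automorphisms over `f` that agree at a vertex agree at its neighbours, by local
injectivity of `f`, hence everywhere.
-/

open SimpleGraph

theorem Pi.single_left_injective {ι β : Type*} [DecidableEq ι] [Zero β] {b : β} (hb : b ≠ 0) :
    Function.Injective fun i : ι => Pi.single i b := by
  intro i j hij
  by_contra hne
  exact hb (by simpa [hne] using congrFun hij i)

theorem hammingNorm_comp_equiv {ι ι' β : Type*} [Fintype ι] [Fintype ι'] [Zero β]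
    [DecidableEq β] (w : ι → β) (e : ι' ≃ ι) : hammingNorm (w ∘ e) = hammingNorm w :=
  Finset.card_equiv e (by simp)

namespace SimpleGraph

variable {V V' W : Type*} {G : SimpleGraph V} {G' : SimpleGraph V'} {H : SimpleGraph W}

theorem Preconnected.forall_of_adj {p : V → Prop} (hG : G.Preconnected)
    (hp : ∀ u v, G.Adj u v → p u → p v) {a : V} (ha : p a) (v : V) : p v := by
  induction (reachable_iff_reflTransGen a v).1 (hG a v) with
  | refl => exact ha
  | tail _ hadj ih => exact hp _ _ hadj ih

theorem Hom.injOn_neighborSet_comp_iso {φ : G' →g H} (hφ : ∀ v, Set.InjOn φ (G'.neighborSet v))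
    (g : G ≃g G') (v : V) : Set.InjOn (φ.comp g.toHom) (G.neighborSet v) :=
  fun _ hu _ hw huw => g.injective <|
    hφ (g v) (g.map_adj_iff.2 hu) (g.map_adj_iff.2 hw) huw

theorem Hom.coe_eq_of_comp_eq (hG : G.Preconnected) {f : V' → W}
    (hf : ∀ v, Set.InjOn f (G'.neighborSet v)) {φ ψ : G →g G'} (hφψ : ∀ v, f (φ v) = f (ψ v))
    {a : V} (ha : φ a = ψ a) : ⇑φ = ⇑ψ := by
  refine funext (hG.forall_of_adj (fun u v huv hu => ?_) ha)
  have hφv : φ v ∈ G'.neighborSet (φ u) := φ.map_adj huv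
  have hψv : ψ v ∈ G'.neighborSet (φ u) := hu ▸ ψ.map_adj huv
  exact hf (φ u) hφv hψv (hφψ v)

theorem Hom.coe_eq_of_eqOn_closedNbhd (hG : G.Preconnected)
    (hGq : ∀ u v w, G.Adj v u → G.Adj v w → u ≠ w → (G.commonNeighbors u w \ {v}).Nonempty)
    (hHq : ∀ u v w, H.Adj v u → H.Adj v w → u ≠ w → (H.commonNeighbors u w \ {v}).Subsingleton)
    {φ ψ : G →g H} (hφ : ∀ v, Set.InjOn φ (G.neighborSet v))
    (hψ : ∀ v, Set.InjOn ψ (G.neighborSet v)) {a : V} (ha : φ a = ψ a)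
    (hnbr : ∀ b, G.Adj a b → φ b = ψ b) : ⇑φ = ⇑ψ := by
  suffices h : ∀ z, φ z = ψ z ∧ ∀ b, G.Adj z b → φ b = ψ b from funext fun z => (h z).1
  refine hG.forall_of_adj (fun z z' hzz' ⟨hz, hzN⟩ => ⟨hzN z' hzz', fun w hz'w => ?_⟩) ⟨ha, hnbr⟩
  obtain rfl | hzw := eq_or_ne z w
  · exact hz
  obtain ⟨c, hc, hcz' : c ≠ z'⟩ := hGq z z' w hzz'.symm hz'w hzw
  rw [mem_commonNeighbors] at hc
  -- `w` is the fourth vertex of the quadrangle `z', z, c, w`, so both images of `w` complete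
  -- the 2-arc `φ z', φ z, φ c` of `H`.
  have hmem : ∀ χ : G →g H, (∀ v, Set.InjOn χ (G.neighborSet v)) →
      χ w ∈ H.commonNeighbors (χ z') (χ c) \ {χ z} := fun χ hχ =>
    ⟨H.mem_commonNeighbors.2 ⟨χ.map_adj hz'w, χ.map_adj hc.2.symm⟩,
      fun h => hzw (hχ z' hz'w hzz'.symm h).symm⟩
  have hψmem := hmem ψ hψ
  rw [← hz, ← hzN z' hzz', ← hzN c hc.1] at hψmem
  exact hHq _ _ _ (φ.map_adj hzz') (φ.map_adj hc.1)
    (fun h => hcz' (hφ z hc.1 hzz' h.symm)) (hmem φ hφ) hψmem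

end SimpleGraph

theorem IsRectagraph.subsingleton_commonNeighbors_diff {V : Type*} {P : SimpleGraph V}
    (hP : IsRectagraph P) {u v w : V} (hu : P.Adj v u) (hw : P.Adj v w) (huw : u ≠ w) :
    (P.commonNeighbors u w \ {v}).Subsingleton := by
  rintro x ⟨hx, hxv⟩ x' ⟨hx', hx'v⟩
  rw [P.mem_commonNeighbors] at hx hx'
  exact (hP.2.2 u v w hu hw huw).unique ⟨hxv, hx⟩ ⟨hx'v, hx'⟩

section Cube

variable {n : ℕ}

theorem hammingNorm_eq_one_iff {w : Fin n → ZMod 2} :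
    hammingNorm w = 1 ↔ ∃ i, w = Pi.single i 1 := by
  simp only [hammingNorm, Finset.card_eq_one, Finset.ext_iff, Finset.mem_filter,
    Finset.mem_univ, true_and, Finset.mem_singleton]
  refine exists_congr fun i => ⟨fun h => funext fun k => ?_, ?_⟩
  · rw [Pi.single_apply]
    split_ifs with hk
    · exact Fin.eq_one_of_ne_zero _ ((h k).2 hk)
    · exact not_not.1 (mt (h k).1 hk)
  · rintro rfl k
    by_cases hk : k = i <;> simp [hk]

theorem cube_adj_iff {a b : Fin n → ZMod 2} :
    (cube n).Adj a b ↔ ∃ i, b = a + Pi.single i 1 := by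
  change hammingDist a b = 1 ↔ _
  simp_rw [hammingDist_eq_hammingNorm, hammingNorm_eq_one_iff, neg_add_eq_iff_eq_add]

theorem cube_adj_add_single (a : Fin n → ZMod 2) (i : Fin n) :
    (cube n).Adj a (a + Pi.single i 1) :=
  cube_adj_iff.2 ⟨i, rfl⟩

theorem cube_reachable_add_single (a : Fin n → ZMod 2) (i : Fin n) (c : ZMod 2) :
    (cube n).Reachable a (a + Pi.single i c) := by
  obtain rfl | rfl : c = 0 ∨ c = 1 := by decide +revert
  · simp
  · exact (cube_adj_add_single a i).reachable

theorem cube_preconnected : (cube n).Preconnected := by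
  intro a b
  have h : ∀ s : Finset (Fin n), (cube n).Reachable a (a + ∑ i ∈ s, Pi.single i ((b - a) i)) := by
    intro s
    induction s using Finset.induction_on with
    | empty => simp
    | insert j s hj ih =>
      rw [Finset.sum_insert hj, add_comm (Pi.single j _), ← add_assoc]
      exact ih.trans (cube_reachable_add_single _ _ _)
  simpa only [Finset.univ_sum_single, add_sub_cancel] using h Finset.univ

theorem cube_commonNeighbors_diff_nonempty {u v w : Fin n → ZMod 2} (hu : (cube n).Adj v u)
    (hw : (cube n).Adj v w) (huw : u ≠ w) : ((cube n).commonNeighbors u w \ {v}).Nonempty := by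
  obtain ⟨i, rfl⟩ := cube_adj_iff.1 hu
  obtain ⟨j, rfl⟩ := cube_adj_iff.1 hw
  have hij : i ≠ j := by rintro rfl; exact huw rfl
  refine ⟨v + Pi.single i 1 + Pi.single j 1, (cube n).mem_commonNeighbors.2
    ⟨cube_adj_add_single _ _, add_right_comm v (Pi.single j 1) _ ▸ cube_adj_add_single _ _⟩, ?_⟩
  intro h
  simpa [hij] using congrFun (Set.mem_singleton_iff.1 h) i

theorem exists_cubeIso_apply_add_single (σ : Equiv.Perm (Fin n)) (x y : Fin n → ZMod 2) :
    ∃ g : cube n ≃g cube n, g x = y ∧ ∀ i, g (x + Pi.single i 1) = y + Pi.single (σ i) 1 := by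
  let e := ((Equiv.subRight x).trans (σ.arrowCongr (Equiv.refl (ZMod 2)))).trans (Equiv.addLeft y)
  have he : ∀ z, e z = y + (z - x) ∘ σ.symm := fun _ => rfl
  have hdist : ∀ a b, hammingDist (e a) (e b) = hammingDist a b := by
    intro a b
    have hsub : e b - e a = (b - a) ∘ σ.symm := by
      funext k
      simp only [he, Pi.sub_apply, Pi.add_apply, Function.comp_apply]
      abel
    rw [hammingDist_eq_hammingNorm, hammingDist_eq_hammingNorm, neg_add_eq_sub, neg_add_eq_sub,
      hsub, hammingNorm_comp_equiv]
  refine ⟨⟨e, fun {a b} => by change hammingDist _ _ = 1 ↔ hammingDist _ _ = 1; rw [hdist]⟩,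
    by simp [he], fun i => ?_⟩
  change e _ = _
  rw [he, add_sub_cancel_left]
  congr 1
  funext k
  simp [Pi.single_apply, Equiv.symm_apply_eq]

theorem exists_perm_of_bijOn_neighborSet {V : Type*} {P : SimpleGraph V}
    {f : (Fin n → ZMod 2) → V}
    (hf : ∀ z, Set.BijOn f ((cube n).neighborSet z) (P.neighborSet (f z)))
    {x y : Fin n → ZMod 2} (hxy : f x = f y) :
    ∃ σ : Equiv.Perm (Fin n), ∀ i, f (y + Pi.single (σ i) 1) = f (x + Pi.single i 1) := by
  have h : ∀ i, ∃ j, f (y + Pi.single j 1) = f (x + Pi.single i 1) := by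
    intro i
    have hi : f (x + Pi.single i 1) ∈ P.neighborSet (f y) :=
      hxy ▸ (hf x).mapsTo (cube_adj_add_single x i)
    obtain ⟨b, hb, hfb⟩ := (hf y).surjOn hi
    obtain ⟨j, rfl⟩ := cube_adj_iff.1 hb
    exact ⟨j, hfb⟩
  choose τ hτ using h
  have hτ_inj : Function.Injective τ := fun i i' hii' =>
    Pi.single_left_injective one_ne_zero <| add_left_cancel <|
      (hf x).injOn (cube_adj_add_single x i) (cube_adj_add_single x i') (by rw [← hτ, ← hτ, hii'])
  exact ⟨Equiv.ofBijective τ (Finite.injective_iff_bijective.1 hτ_inj), hτ⟩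

end Cube

theorem fiber_regular_orbit_general {n : ℕ} {V : Type*}
    (P : SimpleGraph V) (hP : IsRectagraph P)
    (f : (Fin n → ZMod 2) → V) (hf : IsCovering (cube n) P f)
    (v : V) (x y : Fin n → ZMod 2) (hx : f x = v) (hy : f y = v) :
    ∃! g : cube n ≃g cube n, (∀ z, f (g z) = f z) ∧ g x = y := by
  let F : cube n →g P := ⟨f, fun h => (hf.2 _).mapsTo h⟩
  have hF : ∀ z, Set.InjOn F ((cube n).neighborSet z) := fun z => (hf.2 z).injOn
  obtain ⟨σ, hσ⟩ := exists_perm_of_bijOn_neighborSet hf.2 (hx.trans hy.symm)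
  obtain ⟨g, hgx, hg⟩ := exists_cubeIso_apply_add_single σ x y
  have hdeck : ⇑(F.comp g.toHom) = F := by
    refine Hom.coe_eq_of_eqOn_closedNbhd cube_preconnected
      (fun _ _ _ => cube_commonNeighbors_diff_nonempty)
      (fun _ _ _ => hP.subsingleton_commonNeighbors_diff) (Hom.injOn_neighborSet_comp_iso hF g)
      hF (a := x) (show f (g x) = f x by rw [hgx, hx, hy]) fun b hb => ?_
    obtain ⟨i, rfl⟩ := cube_adj_iff.1 hb
    exact (congrArg f (hg i)).trans (hσ i)
  refine ⟨g, ⟨congrFun hdeck, hgx⟩, fun g' ⟨hg'deck, hg'x⟩ => RelIso.ext (congrFun ?_)⟩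
  exact Hom.coe_eq_of_comp_eq cube_preconnected hF (φ := g'.toHom) (ψ := g.toHom)
    (fun z => (hg'deck z).trans (congrFun hdeck z).symm) (hg'x.trans hgx.symm)

/-- For a covering `f : Q_n → P` of a rectagraph `P`, every fiber of `f` is a
single orbit of `K^f = {g ∈ Aut(Q_n) : f ∘ g = f}` on which `K^f` acts
regularly: for any two vertices `x, y` in a common fiber, there is a unique
`g ∈ K^f` with `g x = y`. -/
theorem fiber_regular_orbit {n : ℕ} {V : Type*} [Finite V]
    (P : SimpleGraph V) (hP : IsRectagraph P)
    (f : (Fin n → ZMod 2) → V) (hf : IsCovering (cube n) P f)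
    (v : V) (x y : Fin n → ZMod 2) (hx : f x = v) (hy : f y = v) :
    ∃! g : cube n ≃g cube n, (∀ z, f (g z) = f z) ∧ g x = y :=
  fiber_regular_orbit_general P hP f hf v x y hx hy
end

section
/- Let Π be a rectagraph of valency n with a₂(Π) = 0 and c₃(Π) = 3, and let u be a vertex of Π. Then |Π₂(u)| = C(n,2) and |Π₃(u)| = C(n,3), and consequently the number of vertices of Π is at least 1 + n + C(n,2) + C(n,3). -/
private lemma rect_exists_mid {V : Type*} {P : SimpleGraph V} (hconn : P.Connected)
    {u v : V} (h : P.dist u v = 2) : ∃ x, P.Adj u x ∧ P.Adj x v := by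
  obtain ⟨w, hw⟩ := (hconn u v).exists_walk_length_eq_dist
  rw [h] at hw
  refine ⟨w.getVert 1, ?_, ?_⟩
  · have := w.adj_getVert_succ (i := 0) (by omega)
    simpa using this
  · have := w.adj_getVert_succ (i := 1) (by omega)
    rw [show (1 : ℕ) + 1 = w.length by omega] at this
    simpa using this

private lemma rect_c2_card {V : Type*} [Fintype V] [DecidableEq V] {P : SimpleGraph V}
    [DecidableRel P.Adj] (hP : IsRectagraph P) {u v : V} (h : P.dist u v = 2) :
    (Finset.univ.filter (fun x => P.Adj u x ∧ P.Adj x v)).card = 2 := by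
  obtain ⟨x, hux, hxv⟩ := rect_exists_mid hP.1 h
  have huv : u ≠ v := by rintro rfl; simp [SimpleGraph.dist_self] at h
  obtain ⟨y, ⟨hyx, huy, hvy⟩, hyuniq⟩ := hP.2.2 u x v hux.symm hxv huv
  have hset : Finset.univ.filter (fun t => P.Adj u t ∧ P.Adj t v) = {x, y} := by
    ext t
    simp only [Finset.mem_filter, Finset.mem_univ, true_and, Finset.mem_insert,
      Finset.mem_singleton]
    constructor
    · rintro ⟨h1, h2⟩
      by_cases htx : t = x
      · exact Or.inl htx
      · exact Or.inr (hyuniq t ⟨htx, h1, h2.symm⟩)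
    · rintro (rfl | rfl)
      · exact ⟨hux, hxv⟩
      · exact ⟨huy, hvy.symm⟩
  rw [hset, Finset.card_insert_of_notMem
    (fun h' => hyx (Finset.mem_singleton.mp h').symm), Finset.card_singleton]

private lemma rect_double_count {α β : Type*} (S : Finset α) (T : Finset β)
    (R : α → β → Prop) [∀ x y, Decidable (R x y)] :
    ∑ x ∈ S, (T.filter (fun y => R x y)).card = ∑ y ∈ T, (S.filter (fun x => R x y)).card := by
  simp_rw [Finset.card_filter]
  exact Finset.sum_comm

/-- For a rectagraph of valency `n` with `a₂ = 0` and `c₃ = 3`, the spheres of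
radius 2 and 3 around any vertex have sizes `C(n,2)` and `C(n,3)`, and hence
the graph has at least `1 + n + C(n,2) + C(n,3)` vertices. -/
theorem rectagraph_sphere_sizes {V : Type*} [Fintype V] {n : ℕ}
    (P : SimpleGraph V) (hP : IsRectagraph P)
    (hreg : ∀ u : V, (P.neighborSet u).ncard = n)
    (ha2 : ∀ u v : V, P.dist u v = 2 →
      {w | P.dist u w = 2 ∧ P.Adj v w} = ∅)
    (hc3 : ∀ u v : V, P.dist u v = 3 →
      {w | P.dist u w = 2 ∧ P.Adj v w}.ncard = 3)
    (u : V) :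
    {w | P.dist u w = 2}.ncard = n.choose 2 ∧
    {w | P.dist u w = 3}.ncard = n.choose 3 ∧
    1 + n + n.choose 2 + n.choose 3 ≤ Fintype.card V := by
  classical
  have hconn := hP.1
  -- triangle-free
  have hT : ∀ a b c : V, P.Adj a b → P.Adj a c → P.Adj b c → False := by
    intro a b c h1 h2 h3
    exact hP.2.1 {a, b, c} (SimpleGraph.is3Clique_triple_iff.mpr ⟨h1, h2, h3⟩)
  set S1 := Finset.univ.filter (fun w => P.dist u w = 1) with hS1
  set S2 := Finset.univ.filter (fun w => P.dist u w = 2) with hS2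
  set S3 := Finset.univ.filter (fun w => P.dist u w = 3) with hS3
  -- degree fact as finset
  have hdeg : ∀ x : V, (Finset.univ.filter (fun t => P.Adj x t)).card = n := by
    intro x
    have h := hreg x
    rwa [show P.neighborSet x = ↑(Finset.univ.filter (fun t => P.Adj x t)) from by
      ext t; simp, Set.ncard_coe_finset] at h
  have hS1card : S1.card = n := by
    have h := hreg u
    rwa [show P.neighborSet u = ↑S1 from by
      ext t; simp [hS1, SimpleGraph.dist_eq_one_iff_adj], Set.ncard_coe_finset] at h
  -- c₂ fibers
  have hc2fib : ∀ v ∈ S2, (S1.filter (fun x => P.Adj x v)).card = 2 := by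
    intro v hv
    have hv2 : P.dist u v = 2 := by simpa [hS2] using hv
    have : S1.filter (fun x => P.Adj x v)
        = Finset.univ.filter (fun x => P.Adj u x ∧ P.Adj x v) := by
      ext x
      simp [hS1, Finset.mem_filter, SimpleGraph.dist_eq_one_iff_adj, and_assoc]
    rw [this]
    exact rect_c2_card hP hv2
  -- fibers from S1 to S2
  have hfib12 : ∀ x ∈ S1, (S2.filter (fun v => P.Adj x v)).card = n - 1 := by
    intro x hx
    have hx1 : P.dist u x = 1 := by simpa [hS1] using hx
    have hxu : P.Adj u x := SimpleGraph.dist_eq_one_iff_adj.mp hx1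
    have key : Finset.univ.filter (fun t => P.Adj x t)
        = insert u (S2.filter (fun v => P.Adj x v)) := by
      ext t
      simp only [Finset.mem_filter, Finset.mem_univ, true_and, Finset.mem_insert, hS2]
      constructor
      · intro hxt
        by_cases htu : t = u
        · exact Or.inl htu
        · refine Or.inr ⟨?_, hxt⟩
          have hle : P.dist u t ≤ 2 := by
            have h3 := hconn.dist_triangle (u := u) (v := x) (w := t)
            rw [hx1, SimpleGraph.dist_eq_one_iff_adj.mpr hxt] at h3
            omega
          have h0 : P.dist u t ≠ 0 := fun h =>
            htu (((hconn u t).dist_eq_zero_iff.mp h).symm)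
          have h1 : P.dist u t ≠ 1 := fun h =>
            hT u x t hxu (SimpleGraph.dist_eq_one_iff_adj.mp h) hxt
          omega
      · rintro (rfl | ⟨_, h⟩)
        · exact hxu.symm
        · exact h
    have hnot : u ∉ S2.filter (fun v => P.Adj x v) := by
      simp [hS2, SimpleGraph.dist_self]
    have hn := hdeg x
    rw [key, Finset.card_insert_of_notMem hnot] at hn
    omega
  -- fibers from S2 to S3
  have hfib23 : ∀ v ∈ S2, (S3.filter (fun t => P.Adj v t)).card = n - 2 := by
    intro v hv
    have hv2 : P.dist u v = 2 := by simpa [hS2] using hv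
    have ha2' := ha2 u v hv2
    have key : Finset.univ.filter (fun t => P.Adj v t)
        = (Finset.univ.filter (fun t => P.Adj u t ∧ P.Adj t v))
          ∪ (S3.filter (fun t => P.Adj v t)) := by
      ext t
      simp only [Finset.mem_filter, Finset.mem_univ, true_and, Finset.mem_union, hS3]
      constructor
      · intro hvt
        have hle : P.dist u t ≤ 3 := by
          have h3 := hconn.dist_triangle (u := u) (v := v) (w := t)
          rw [hv2, SimpleGraph.dist_eq_one_iff_adj.mpr hvt] at h3
          omega
        have hge : 1 ≤ P.dist u t := by
          have h3 := hconn.dist_triangle (u := u) (v := t) (w := v)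
          rw [hv2] at h3
          have : P.dist t v = 1 := SimpleGraph.dist_eq_one_iff_adj.mpr hvt.symm
          omega
        have h2 : P.dist u t ≠ 2 := fun h =>
          Set.eq_empty_iff_forall_notMem.mp ha2' t ⟨h, hvt⟩
        have : P.dist u t = 1 ∨ P.dist u t = 3 := by omega
        rcases this with h | h
        · exact Or.inl ⟨SimpleGraph.dist_eq_one_iff_adj.mp h, hvt.symm⟩
        · exact Or.inr ⟨h, hvt⟩
      · rintro (⟨_, h⟩ | ⟨_, h⟩)
        · exact h.symm
        · exact h
    have hdisj : Disjoint (Finset.univ.filter (fun t => P.Adj u t ∧ P.Adj t v))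
        (S3.filter (fun t => P.Adj v t)) := by
      rw [Finset.disjoint_left]
      intro t ht1 ht3
      simp only [Finset.mem_filter, Finset.mem_univ, true_and, hS3] at ht1 ht3
      have := SimpleGraph.dist_eq_one_iff_adj.mpr ht1.1
      omega
    have hn := hdeg v
    rw [key, Finset.card_union_of_disjoint hdisj, rect_c2_card hP hv2] at hn
    omega
  -- fibers from S3 back to S2
  have hfib32 : ∀ w ∈ S3, (S2.filter (fun v => P.Adj v w)).card = 3 := by
    intro w hw
    have hw3 : P.dist u w = 3 := by simpa [hS3] using hw
    have h := hc3 u w hw3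
    rwa [show {t | P.dist u t = 2 ∧ P.Adj w t} = ↑(S2.filter (fun v => P.Adj v w)) from by
      ext t; simp [hS2, SimpleGraph.adj_comm, and_comm], Set.ncard_coe_finset] at h
  -- first double count : |S1|*(n-1) = |S2|*2
  have e12 := rect_double_count S1 S2 (fun x v => P.Adj x v)
  rw [Finset.sum_congr rfl hfib12, Finset.sum_congr rfl hc2fib, Finset.sum_const,
    Finset.sum_const, smul_eq_mul, smul_eq_mul, hS1card] at e12
  have hch2 : n.choose 2 * 2 = n * (n - 1) := by
    have := Nat.choose_succ_right_eq n 1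
    simpa [Nat.choose_one_right] using this
  have hS2card : S2.card = n.choose 2 := by omega
  -- second double count : |S2|*(n-2) = |S3|*3
  have e23 := rect_double_count S2 S3 (fun v w => P.Adj v w)
  rw [Finset.sum_congr rfl hfib23, Finset.sum_congr rfl hfib32, Finset.sum_const,
    Finset.sum_const, smul_eq_mul, smul_eq_mul, hS2card] at e23
  have hch3 : n.choose 3 * 3 = n.choose 2 * (n - 2) := Nat.choose_succ_right_eq n 2
  have hS3card : S3.card = n.choose 3 := by omega
  have hco2 : {w | P.dist u w = 2}.ncard = S2.card := by
    rw [show {w | P.dist u w = 2} = ↑S2 from by ext w; simp [hS2], Set.ncard_coe_finset]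
  have hco3 : {w | P.dist u w = 3}.ncard = S3.card := by
    rw [show {w | P.dist u w = 3} = ↑S3 from by ext w; simp [hS3], Set.ncard_coe_finset]
  refine ⟨by rw [hco2, hS2card], by rw [hco3, hS3card], ?_⟩
  -- cardinality bound
  have hS0 : ({u} : Finset V) = Finset.univ.filter (fun w => P.dist u w = 0) := by
    ext w
    simp only [Finset.mem_singleton, Finset.mem_filter, Finset.mem_univ, true_and]
    rw [(hconn u w).dist_eq_zero_iff]
    exact ⟨fun h => h.symm, fun h => h.symm⟩
  have d : ∀ i j : ℕ, i ≠ j → Disjoint (Finset.univ.filter (fun w => P.dist u w = i))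
      (Finset.univ.filter (fun w => P.dist u w = j)) := by
    intro i j hij
    rw [Finset.disjoint_left]
    intro a ha hb
    simp only [Finset.mem_filter, Finset.mem_univ, true_and] at ha hb
    omega
  have hbound : ((({u} : Finset V) ∪ S1) ∪ S2 ∪ S3).card
      = 1 + n + n.choose 2 + n.choose 3 := by
    rw [Finset.card_union_of_disjoint, Finset.card_union_of_disjoint,
      Finset.card_union_of_disjoint, Finset.card_singleton, hS1card, hS2card, hS3card]
    · rw [hS0, hS1]; exact d 0 1 (by omega)
    · rw [Finset.disjoint_union_left, hS0, hS1, hS2]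
      exact ⟨d 0 2 (by omega), d 1 2 (by omega)⟩
    · rw [Finset.disjoint_union_left, Finset.disjoint_union_left, hS0, hS1, hS2, hS3]
      exact ⟨⟨d 0 3 (by omega), d 1 3 (by omega)⟩, d 2 3 (by omega)⟩
  calc 1 + n + n.choose 2 + n.choose 3 = _ := hbound.symm
    _ ≤ Finset.univ.card := Finset.card_le_univ _
    _ = Fintype.card V := Finset.card_univ
end

section
/- Let G be a subgroup of Sₙ acting on the set of 2-subsets of {1,...,n}, with n ≥ 5. If G is transitive of rank 3 on 2-subsets, then G is 4-homogeneous on {1,...,n} (acts transitively on 4-subsets). -/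
/-!
The size of `p.1 ∩ p.2` is constant on `G`-orbits of pairs `p` of 2-subsets and takes the
three values 0, 1, 2 once `n ≥ 4`, so with only three orbits it is a complete orbit invariant.
Hence `G` is transitive on ordered pairs of disjoint 2-subsets, and every 4-subset is the union
of such a pair.
-/

/-- Two pairs of 2-subsets are in the same `G`-orbit of the diagonal action. -/
def SameOrbitOnPairs {n : ℕ} (G : Subgroup (Equiv.Perm (Fin n)))
    (p q : Finset (Fin n) × Finset (Fin n)) : Prop :=
  ∃ g ∈ G, p.1.image g = q.1 ∧ p.2.image g = q.2

open Finset

theorem Equivalence.rel_of_apply_eq_of_card_le {ι β γ : Type*} [Finite ι] {r : β → β → Prop}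
    (hr : Equivalence r) {f : β → γ} (hf : ∀ ⦃x y⦄, r x y → f x = f y) {P : Set β}
    {p : ι → β} (hcover : ∀ q ∈ P, ∃ i, r (p i) q) (hcard : Nat.card ι ≤ (f '' P).ncard)
    {q q' : β} (hq : q ∈ P) (hq' : q' ∈ P) (hqq' : f q = f q') : r q q' := by
  have hrange : f '' P ⊆ Set.range (f ∘ p) := by
    rintro _ ⟨x, hx, rfl⟩
    obtain ⟨i, hi⟩ := hcover x hx
    exact ⟨i, hf hi⟩
  have hinj : (f ∘ p).Injective := by
    refine Set.rangeFactorization_injective.mp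
      (Set.rangeFactorization_surjective.bijective_of_nat_card_le ?_).1
    rw [Nat.card_coe_set_eq]
    exact hcard.trans (Set.ncard_le_ncard hrange (Set.finite_range _))
  obtain ⟨i, hi⟩ := hcover q hq
  obtain ⟨j, hj⟩ := hcover q' hq'
  obtain rfl : i = j := hinj ((hf hi).trans (hqq'.trans (hf hj).symm))
  exact hr.trans (hr.symm hi) hj

theorem Finset.image_card_inter_of_card_eq_two {α : Type*} [DecidableEq α] [Fintype α]
    (hα : 4 ≤ Fintype.card α) :
    (fun q : Finset α × Finset α ↦ #(q.1 ∩ q.2)) '' {q | #q.1 = 2 ∧ #q.2 = 2} = Set.Iic 2 := by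
  refine subset_antisymm ?_ fun k hk ↦ ?_
  · rintro _ ⟨q, ⟨hq₁, -⟩, rfl⟩
    exact hq₁ ▸ card_le_card inter_subset_left
  obtain ⟨e⟩ := Function.Embedding.nonempty_of_card_le (α := Fin 4) (by simpa using hα)
  obtain ⟨u, v, hu, hv, huv⟩ : ∃ u v : Finset (Fin 4), #u = 2 ∧ #v = 2 ∧ #(u ∩ v) = k := by
    have : k ≤ 2 := hk
    interval_cases k
    exacts [⟨{0, 1}, {2, 3}, by decide⟩, ⟨{0, 1}, {1, 2}, by decide⟩, ⟨{0, 1}, {0, 1}, by decide⟩]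
  exact ⟨(u.map e, v.map e), by simp [hu, hv], by simp [← map_inter, huv]⟩

theorem Finset.exists_subset_card_eq_two_sdiff {α : Type*} [DecidableEq α] {s : Finset α}
    (hs : #s = 4) : ∃ u ⊆ s, #u = 2 ∧ #(s \ u) = 2 := by
  obtain ⟨u, hus, hu⟩ := exists_subset_card_eq (s := s) (n := 2) (by omega)
  exact ⟨u, hus, hu, by rw [card_sdiff_of_subset hus]; omega⟩

namespace SameOrbitOnPairs

variable {n : ℕ} {G : Subgroup (Equiv.Perm (Fin n))}

theorem equivalence (G : Subgroup (Equiv.Perm (Fin n))) : Equivalence (SameOrbitOnPairs G) where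
  refl p := ⟨1, G.one_mem, by simp, by simp⟩
  symm := by
    rintro p q ⟨g, hg, h₁, h₂⟩
    refine ⟨g⁻¹, G.inv_mem hg, ?_, ?_⟩ <;> simp [← h₁, ← h₂, image_image]
  trans := by
    rintro p q r ⟨g, hg, h₁, h₂⟩ ⟨g', hg', h₁', h₂'⟩
    exact ⟨g' * g, G.mul_mem hg' hg, by simp [← h₁', ← h₁, image_image],
      by simp [← h₂', ← h₂, image_image]⟩

theorem card_inter_eq {p q : Finset (Fin n) × Finset (Fin n)} (h : SameOrbitOnPairs G p q) :
    #(p.1 ∩ p.2) = #(q.1 ∩ q.2) := by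
  obtain ⟨g, -, h₁, h₂⟩ := h
  rw [← h₁, ← h₂, ← image_inter _ _ g.injective, card_image_of_injective _ g.injective]

theorem exists_image_union_eq {p q : Finset (Fin n) × Finset (Fin n)}
    (h : SameOrbitOnPairs G p q) : ∃ g ∈ G, (p.1 ∪ p.2).image g = q.1 ∪ q.2 := by
  obtain ⟨g, hg, h₁, h₂⟩ := h
  exact ⟨g, hg, by rw [image_union, h₁, h₂]⟩

end SameOrbitOnPairs

theorem rank3_on_pairs_imp_four_homogeneous_general {n : ℕ}
    (G : Subgroup (Equiv.Perm (Fin n)))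
    (hrank3 : ∃ p₁ p₂ p₃ : Finset (Fin n) × Finset (Fin n),
      (p₁.1.card = 2 ∧ p₁.2.card = 2) ∧ (p₂.1.card = 2 ∧ p₂.2.card = 2) ∧
      (p₃.1.card = 2 ∧ p₃.2.card = 2) ∧
      ¬ SameOrbitOnPairs G p₁ p₂ ∧ ¬ SameOrbitOnPairs G p₁ p₃ ∧
      ¬ SameOrbitOnPairs G p₂ p₃ ∧
      ∀ q : Finset (Fin n) × Finset (Fin n), q.1.card = 2 → q.2.card = 2 →
        SameOrbitOnPairs G p₁ q ∨ SameOrbitOnPairs G p₂ q ∨ SameOrbitOnPairs G p₃ q) :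
    ∀ s t : Finset (Fin n), s.card = 4 → t.card = 4 → ∃ g ∈ G, s.image g = t := by
  intro s t hs ht
  obtain ⟨p₁, p₂, p₃, -, -, -, -, -, -, hcover⟩ := hrank3
  have hn : 4 ≤ Fintype.card (Fin n) := hs ▸ s.card_le_univ
  have hcomplete {q q' : Finset (Fin n) × Finset (Fin n)} (hq : #q.1 = 2 ∧ #q.2 = 2)
      (hq' : #q'.1 = 2 ∧ #q'.2 = 2) (hqq' : #(q.1 ∩ q.2) = #(q'.1 ∩ q'.2)) :
      SameOrbitOnPairs G q q' :=
    (SameOrbitOnPairs.equivalence G).rel_of_apply_eq_of_card_le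
      (fun _ _ ↦ SameOrbitOnPairs.card_inter_eq) (P := {q | #q.1 = 2 ∧ #q.2 = 2})
      (p := ![p₁, p₂, p₃])
      (fun q hq ↦ by simpa [Fin.exists_fin_succ] using hcover q hq.1 hq.2)
      (by simp [image_card_inter_of_card_eq_two hn]) hq hq' hqq'
  obtain ⟨u, hus, hu, hsu⟩ := exists_subset_card_eq_two_sdiff hs
  obtain ⟨v, hvt, hv, htv⟩ := exists_subset_card_eq_two_sdiff ht
  obtain ⟨g, hg, hgs⟩ := (hcomplete (q := (u, s \ u)) (q' := (v, t \ v)) ⟨hu, hsu⟩ ⟨hv, htv⟩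
    (by simp)).exists_image_union_eq
  exact ⟨g, hg, by simpa [union_sdiff_of_subset hus, union_sdiff_of_subset hvt] using hgs⟩

/-- If `G ≤ Sₙ` (`n ≥ 5`) is transitive of rank 3 on the 2-subsets of
`{1,…,n}` — i.e. transitive on 2-subsets with exactly three orbits on ordered
pairs of 2-subsets — then `G` is 4-homogeneous: it is transitive on 4-subsets. -/
theorem rank3_on_pairs_imp_four_homogeneous {n : ℕ} (hn : 5 ≤ n)
    (G : Subgroup (Equiv.Perm (Fin n)))
    (htrans : ∀ s t : Finset (Fin n), s.card = 2 → t.card = 2 →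
      ∃ g ∈ G, s.image g = t)
    (hrank3 : ∃ p₁ p₂ p₃ : Finset (Fin n) × Finset (Fin n),
      (p₁.1.card = 2 ∧ p₁.2.card = 2) ∧ (p₂.1.card = 2 ∧ p₂.2.card = 2) ∧
      (p₃.1.card = 2 ∧ p₃.2.card = 2) ∧
      ¬ SameOrbitOnPairs G p₁ p₂ ∧ ¬ SameOrbitOnPairs G p₁ p₃ ∧
      ¬ SameOrbitOnPairs G p₂ p₃ ∧
      ∀ q : Finset (Fin n) × Finset (Fin n), q.1.card = 2 → q.2.card = 2 →
        SameOrbitOnPairs G p₁ q ∨ SameOrbitOnPairs G p₂ q ∨ SameOrbitOnPairs G p₃ q) :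
    ∀ s t : Finset (Fin n), s.card = 4 → t.card = 4 → ∃ g ∈ G, s.image g = t :=
  rank3_on_pairs_imp_four_homogeneous_general G hrank3
end

section
/- Let Π be a rectagraph of valency n ≥ 3 and Γ a connected component of the distance-2 graph Π₂ of Π. Then the restriction map from the setwise stabilizer of VΓ in Aut(Π) to Aut(Γ), sending g to its restriction to VΓ, is an injective group homomorphism. -/
/-- The distance-2 graph of a graph `G`. -/
def dist2 {V : Type*} (G : SimpleGraph V) : SimpleGraph V where
  Adj u v := G.dist u v = 2
  symm := ⟨fun u v h => by rwa [SimpleGraph.dist_comm]⟩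
  loopless := ⟨fun u h => by simp only [SimpleGraph.dist_self] at h; omega⟩

open SimpleGraph

section

variable {V : Type*} {G : SimpleGraph V}

theorem SimpleGraph.dist_eq_two_of_adj_of_adj (hG : G.CliqueFree 3) {v x w : V}
    (hx : G.Adj v x) (hw : G.Adj v w) (hxw : x ≠ w) : G.dist x w = 2 := by
  classical
  have hxw' : ¬ G.Adj x w := fun h => hG {v, x, w} (is3Clique_triple_iff.mpr ⟨hx, hw, h⟩)
  have : G.edist x w = 2 := G.edist_eq_two_iff.mpr ⟨hxw, hxw', v, hx.symm, hw.symm⟩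
  simp [dist, this]

theorem SimpleGraph.ConnectedComponent.mem_supp_of_adj_of_adj (hG : G.CliqueFree 3)
    {c : (dist2 G).ConnectedComponent} {x v u : V} (hx : x ∈ c.supp) (hxv : G.Adj x v)
    (hvu : G.Adj v u) : u ∈ c.supp := by
  by_cases hxu : x = u
  · exact hxu ▸ hx
  · have hadj : (dist2 G).Adj x u := dist_eq_two_of_adj_of_adj hG hxv.symm hvu hxu
    rw [mem_supp_iff] at hx ⊢
    rw [← hx]
    exact ConnectedComponent.sound hadj.symm.reachable

theorem SimpleGraph.ConnectedComponent.mem_supp_or_neighborSet_subset_supp (hG : G.Connected)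
    (hG3 : G.CliqueFree 3) (c : (dist2 G).ConnectedComponent) (v : V) :
    v ∈ c.supp ∨ G.neighborSet v ⊆ c.supp := by
  obtain ⟨x, rfl⟩ := c.exists_rep
  obtain ⟨p⟩ := hG.preconnected v x
  induction p with
  | nil => exact Or.inl rfl
  | cons hab p ih =>
    rcases ih with hb | hN
    · exact Or.inr fun u hu => mem_supp_of_adj_of_adj hG3 hb hab.symm hu
    · exact Or.inl (hN hab.symm)

theorem IsRectagraph.ncard_commonNeighbors_le_two {P : SimpleGraph V} (hP : IsRectagraph P)
    {u w : V} (huw : u ≠ w) : (P.commonNeighbors u w).ncard ≤ 2 := by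
  rcases (P.commonNeighbors u w).eq_empty_or_nonempty with hempty | ⟨v, hv⟩
  · simp [hempty]
  rw [mem_commonNeighbors] at hv
  obtain ⟨x, -, hx⟩ := hP.2.2 u v w hv.1.symm hv.2.symm huw
  have hsub : P.commonNeighbors u w ⊆ {v, x} := by
    intro y hy
    rw [mem_commonNeighbors] at hy
    by_cases hyv : y = v
    · exact Or.inl hyv
    · exact Or.inr (hx y ⟨hyv, hy⟩)
  calc (P.commonNeighbors u w).ncard ≤ ({v, x} : Set V).ncard := Set.ncard_le_ncard hsub
    _ ≤ ({x} : Set V).ncard + 1 := Set.ncard_insert_le v {x}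
    _ = 2 := by rw [Set.ncard_singleton]

theorem SimpleGraph.Iso.neighborSet_subset_commonNeighbors_apply (g : G ≃g G) {v : V}
    (hfix : ∀ u ∈ G.neighborSet v, g u = u) : G.neighborSet v ⊆ G.commonNeighbors v (g v) := by
  intro u hu
  refine ⟨hu, ?_⟩
  have hgu := g.map_adj_iff.mpr hu
  rwa [hfix u hu] at hgu

theorem IsRectagraph.apply_eq_of_forall_neighbor_fixed {P : SimpleGraph V} (hP : IsRectagraph P)
    (g : P ≃g P) {v : V} (hdeg : 3 ≤ (P.neighborSet v).ncard)
    (hfix : ∀ u ∈ P.neighborSet v, g u = u) : g v = v := by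
  by_contra hne
  have hcommon : P.commonNeighbors v (g v) = P.neighborSet v :=
    (P.commonNeighbors_subset_neighborSet_left v (g v)).antisymm
      (g.neighborSet_subset_commonNeighbors_apply hfix)
  have hle := hP.ncard_commonNeighbors_le_two (Ne.symm hne)
  rw [hcommon] at hle
  omega

end

theorem restriction_to_component_injective_general {V : Type*} {n : ℕ}
    (hn : 3 ≤ n) (P : SimpleGraph V) (hP : IsRectagraph P)
    (hreg : ∀ u : V, (P.neighborSet u).ncard = n)
    (c : (dist2 P).ConnectedComponent)
    (g : P ≃g P)
    (hfix : ∀ x ∈ c.supp, g x = x) :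
    ∀ x : V, g x = x := by
  intro v
  rcases c.mem_supp_or_neighborSet_subset_supp hP.1 hP.2.1 v with hv | hN
  · exact hfix v hv
  · exact hP.apply_eq_of_forall_neighbor_fixed g (hreg v ▸ hn) fun u hu => hfix u (hN hu)

/-- Let `P` be a rectagraph of valency `n ≥ 3` and `Γ` a connected component of
its distance-2 graph, with vertex set `S`. Then restriction to `S` is injective
on the setwise stabiliser of `S` in `Aut(P)` (restriction is clearly a group
homomorphism to `Aut(Γ)`): an automorphism of `P` stabilising `S` setwise and
fixing `S` pointwise is the identity. -/
theorem restriction_to_component_injective {V : Type*} [Finite V] {n : ℕ}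
    (hn : 3 ≤ n) (P : SimpleGraph V) (hP : IsRectagraph P)
    (hreg : ∀ u : V, (P.neighborSet u).ncard = n)
    (c : (dist2 P).ConnectedComponent)
    (g : P ≃g P) (hstab : ∀ x : V, g x ∈ c.supp ↔ x ∈ c.supp)
    (hfix : ∀ x ∈ c.supp, g x = x) :
    ∀ x : V, g x = x :=
  restriction_to_component_injective_general hn P hP hreg c g hfix
end
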